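/- arXiv:2007.08570 — 3 statements merged into one kernel-verified Lean document; each statement's English description precedes it below -/
import Mathlib

section
/- Let H = H_A ⊗ H_B with dim H_A = d_A, dim H_B = d_B, d = d_A d_B, and let U be a unitary on H. Then (1/d) Re Σ_{i,j} p_i q_j Tr((V_i† ⊗ I) U† (I ⊗ W_j†) U (V_i ⊗ I) U† (I ⊗ W_j) U) = (1/d²) Tr(S_{AA'} U^{⊗2} S_{AA'} U^{†⊗2}), where {(p_i, V_i)} and {(q_j, W_j)} are 1-designs on H_A and H_B respectively, and S_{AA'} is the swap of the two A factors in (H_A ⊗ H_B)^{⊗2}. -/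
open Matrix Kronecker BigOperators

noncomputable section

/-- The swap `S_{AA'}` of the two `A` factors in `(H_A ⊗ H_B)^{⊗2}`. -/
def SAA (dA dB : ℕ) :
    Matrix ((Fin dA × Fin dB) × (Fin dA × Fin dB)) ((Fin dA × Fin dB) × (Fin dA × Fin dB)) ℂ :=
  Matrix.of fun p q =>
    if p.1.1 = q.2.1 ∧ p.2.1 = q.1.1 ∧ p.1.2 = q.1.2 ∧ p.2.2 = q.2.2 then 1 else 0

/-- The bipartite OTOC `G_U = 1 − (1/d²) Tr(S_{AA'} U^{⊗2} S_{AA'} U^{†⊗2})`. -/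
def Greal (dA dB : ℕ) (U : Matrix (Fin dA × Fin dB) (Fin dA × Fin dB) ℂ) : ℝ :=
  1 - (1 / ((dA * dB : ℝ))^2) *
    (Matrix.trace (SAA dA dB * (U ⊗ₖ U) * SAA dA dB * (Uᴴ ⊗ₖ Uᴴ))).re

/-- Coordinate form of the 1-design property. -/
theorem designCoord {d n : ℕ} (p : Fin n → ℝ) (V : Fin n → Matrix (Fin d) (Fin d) ℂ)
    (hdes : ∀ X : Matrix (Fin d) (Fin d) ℂ,
      ∑ i, (p i : ℂ) • (V i * X * (V i)ᴴ) = (Matrix.trace X / d) • 1)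
    (a a' x y : Fin d) :
    ∑ i, (p i : ℂ) * (V i a x * star (V i a' y)) =
      if a = a' ∧ x = y then ((d : ℂ))⁻¹ else 0 := by
  have h := congr_fun (congr_fun (hdes (Matrix.single x y 1)) a) a'
  simp only [Matrix.sum_apply, Matrix.smul_apply, Matrix.mul_apply, Matrix.single,
    Matrix.conjTranspose_apply, Matrix.one_apply, Matrix.of_apply, smul_eq_mul,
    Matrix.trace, Matrix.diag, ite_and] at h
  simp only [mul_ite, ite_mul, one_mul, mul_one, zero_mul, mul_zero, Finset.sum_ite_eq,
    Finset.sum_ite_eq', Finset.mem_univ, if_true] at h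
  rw [h]
  by_cases h1 : a = a' <;> by_cases h2 : x = y <;>
    simp [h1, h2, div_eq_mul_inv, eq_comm]

theorem entryCp {dA dB : ℕ} (U : Matrix (Fin dA × Fin dB) (Fin dA × Fin dB) ℂ)
    (W' : Matrix (Fin dB) (Fin dB) ℂ) (k k' : Fin dA × Fin dB) :
    (Uᴴ * ((1 : Matrix (Fin dA) (Fin dA) ℂ) ⊗ₖ W'ᴴ) * U) k k' =
      ∑ u : Fin dA × Fin dB × Fin dB,
        star (U (u.1, u.2.2) k) * star (W' u.2.1 u.2.2) * U (u.1, u.2.1) k' := by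
  simp only [Matrix.mul_apply, Matrix.kroneckerMap_apply, Matrix.conjTranspose_apply,
    Matrix.one_apply, Fintype.sum_prod_type, ite_mul, mul_ite, mul_zero, zero_mul,
    one_mul, mul_one, Finset.sum_ite_irrel, Finset.sum_const_zero,
    Finset.sum_ite_eq, Finset.sum_ite_eq', Finset.mem_univ, if_true,
    Finset.sum_mul, Finset.mul_sum]

theorem entryDp {dA dB : ℕ} (U : Matrix (Fin dA × Fin dB) (Fin dA × Fin dB) ℂ)
    (W' : Matrix (Fin dB) (Fin dB) ℂ) (k k' : Fin dA × Fin dB) :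
    (Uᴴ * ((1 : Matrix (Fin dA) (Fin dA) ℂ) ⊗ₖ W') * U) k k' =
      ∑ u : Fin dA × Fin dB × Fin dB,
        star (U (u.1, u.2.2) k) * W' u.2.2 u.2.1 * U (u.1, u.2.1) k' := by
  simp only [Matrix.mul_apply, Matrix.kroneckerMap_apply, Matrix.conjTranspose_apply,
    Matrix.one_apply, Fintype.sum_prod_type, ite_mul, mul_ite, mul_zero, zero_mul,
    one_mul, mul_one, Finset.sum_ite_irrel, Finset.sum_const_zero,
    Finset.sum_ite_eq, Finset.sum_ite_eq', Finset.mem_univ, if_true,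
    Finset.sum_mul, Finset.mul_sum]

theorem traceLp {dA dB : ℕ} (C D : Matrix (Fin dA × Fin dB) (Fin dA × Fin dB) ℂ)
    (V' : Matrix (Fin dA) (Fin dA) ℂ) :
    Matrix.trace ((V'ᴴ ⊗ₖ (1 : Matrix (Fin dB) (Fin dB) ℂ)) * C *
        (V' ⊗ₖ (1 : Matrix (Fin dB) (Fin dB) ℂ)) * D) =
      ∑ z : Fin dA × Fin dB × Fin dA × Fin dB × Fin dA × Fin dA,
        star (V' z.2.2.2.2.2 z.1) * C (z.2.2.2.2.2, z.2.1) (z.2.2.2.2.1, z.2.2.2.1) *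
          V' z.2.2.2.2.1 z.2.2.1 * D (z.2.2.1, z.2.2.2.1) (z.1, z.2.1) := by
  simp only [Matrix.trace, Matrix.diag, Matrix.mul_apply, Finset.sum_mul, Finset.mul_sum,
    Matrix.kroneckerMap_apply, Matrix.conjTranspose_apply, Matrix.one_apply,
    Fintype.sum_prod_type, ite_mul, mul_ite, mul_zero, zero_mul, one_mul, mul_one,
    Finset.sum_ite_irrel, Finset.sum_const_zero, Finset.sum_ite_eq, Finset.sum_ite_eq',
    Finset.mem_univ, if_true]

theorem traceRp {dA dB : ℕ} (U : Matrix (Fin dA × Fin dB) (Fin dA × Fin dB) ℂ) :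
    Matrix.trace (SAA dA dB * (U ⊗ₖ U) * SAA dA dB * (Uᴴ ⊗ₖ Uᴴ)) =
      ∑ t : Fin dA × Fin dB × Fin dA × Fin dB × Fin dA × Fin dB × Fin dA × Fin dB,
        U (t.2.2.1, t.2.1) (t.2.2.2.2.2.2.1, t.2.2.2.2.2.1) *
          U (t.1, t.2.2.2.1) (t.2.2.2.2.1, t.2.2.2.2.2.2.2) *
          (star (U (t.1, t.2.1) (t.2.2.2.2.1, t.2.2.2.2.2.1)) *
            star (U (t.2.2.1, t.2.2.2.1) (t.2.2.2.2.2.2.1, t.2.2.2.2.2.2.2))) := by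
  simp only [SAA, Matrix.trace, Matrix.diag, Matrix.mul_apply, Finset.sum_mul, Finset.mul_sum,
    Matrix.kroneckerMap_apply, Matrix.conjTranspose_apply, Matrix.of_apply,
    Fintype.sum_prod_type, ite_and, ite_mul, mul_ite, mul_zero, zero_mul, one_mul, mul_one,
    Finset.sum_ite_irrel, Finset.sum_const_zero, Finset.sum_ite_eq, Finset.sum_ite_eq',
    Finset.mem_univ, if_true]

/-- The permutation of indices matching the two replica sums. -/
def permE (dA dB : ℕ) :
    (Fin dA × Fin dB × Fin dA × Fin dB × Fin dA × Fin dB × Fin dA × Fin dB) ≃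
      ((Fin dA × Fin dB × Fin dB × Fin dA) × (Fin dA × Fin dB × Fin dB × Fin dA)) where
  toFun t := ((t.2.2.2.2.1, t.2.2.2.2.2.2.2, t.2.2.2.2.2.1, t.2.2.2.2.2.2.1),
              (t.2.2.1, t.2.1, t.2.2.2.1, t.1))
  invFun z := (z.2.2.2.2, z.2.2.1, z.2.1, z.2.2.2.1, z.1.1, z.1.2.2.1, z.1.2.2.2, z.1.2.1)
  left_inv _ := rfl
  right_inv _ := rfl

theorem pack2 {α β M : Type*} [Fintype α] [Fintype β] [AddCommMonoid M] (f : α → β → M) :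
    ∑ a, ∑ b, f a b = ∑ z : α × β, f z.1 z.2 :=
  (Fintype.sum_prod_type (f := fun z => f z.1 z.2)).symm

theorem javg {dA dB nB : ℕ}
    (q : Fin nB → ℝ) (W : Fin nB → Matrix (Fin dB) (Fin dB) ℂ)
    (hdesW : ∀ a a' x y : Fin dB, ∑ j, (q j : ℂ) * (W j a x * star (W j a' y)) =
      if a = a' ∧ x = y then ((dB : ℂ))⁻¹ else 0)
    (U : Matrix (Fin dA × Fin dB) (Fin dA × Fin dB) ℂ) (k1 k2 k3 k4 : Fin dA × Fin dB) :
    ∑ j, (q j : ℂ) *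
        ((Uᴴ * ((1 : Matrix (Fin dA) (Fin dA) ℂ) ⊗ₖ (W j)ᴴ) * U) k1 k2 *
         (Uᴴ * ((1 : Matrix (Fin dA) (Fin dA) ℂ) ⊗ₖ (W j)) * U) k3 k4) =
      ∑ m : Fin dA × Fin dB × Fin dB × Fin dA, ((dB : ℂ))⁻¹ *
        (star (U (m.1, m.2.2.1) k1) * U (m.1, m.2.1) k2 *
          star (U (m.2.2.2, m.2.1) k3) * U (m.2.2.2, m.2.2.1) k4) := by
  calc
    ∑ j, (q j : ℂ) *
        ((Uᴴ * ((1 : Matrix (Fin dA) (Fin dA) ℂ) ⊗ₖ (W j)ᴴ) * U) k1 k2 *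
         (Uᴴ * ((1 : Matrix (Fin dA) (Fin dA) ℂ) ⊗ₖ (W j)) * U) k3 k4)
      = ∑ j, ∑ u : Fin dA × Fin dB × Fin dB, ∑ v : Fin dA × Fin dB × Fin dB,
          (q j : ℂ) * ((star (U (u.1, u.2.2) k1) * star (W j u.2.1 u.2.2) * U (u.1, u.2.1) k2) *
            (star (U (v.1, v.2.2) k3) * W j v.2.2 v.2.1 * U (v.1, v.2.1) k4)) := by
        refine Finset.sum_congr rfl fun j _ => ?_
        rw [entryCp, entryDp, Finset.sum_mul_sum, Finset.mul_sum]
        exact Finset.sum_congr rfl fun u _ => Finset.mul_sum _ _ _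
    _ = ∑ u : Fin dA × Fin dB × Fin dB, ∑ v : Fin dA × Fin dB × Fin dB, ∑ j,
          (q j : ℂ) * ((star (U (u.1, u.2.2) k1) * star (W j u.2.1 u.2.2) * U (u.1, u.2.1) k2) *
            (star (U (v.1, v.2.2) k3) * W j v.2.2 v.2.1 * U (v.1, v.2.1) k4)) := by
        rw [show (∑ j, ∑ u : Fin dA × Fin dB × Fin dB, ∑ v : Fin dA × Fin dB × Fin dB,
          (q j : ℂ) * ((star (U (u.1, u.2.2) k1) * star (W j u.2.1 u.2.2) * U (u.1, u.2.1) k2) *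
            (star (U (v.1, v.2.2) k3) * W j v.2.2 v.2.1 * U (v.1, v.2.1) k4))) =
          ∑ u : Fin dA × Fin dB × Fin dB, ∑ j, ∑ v : Fin dA × Fin dB × Fin dB,
          (q j : ℂ) * ((star (U (u.1, u.2.2) k1) * star (W j u.2.1 u.2.2) * U (u.1, u.2.1) k2) *
            (star (U (v.1, v.2.2) k3) * W j v.2.2 v.2.1 * U (v.1, v.2.1) k4))
          from Finset.sum_comm]
        exact Finset.sum_congr rfl fun u _ => Finset.sum_comm
    _ = ∑ u : Fin dA × Fin dB × Fin dB, ∑ v : Fin dA × Fin dB × Fin dB,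
          (if v.2.2 = u.2.1 ∧ v.2.1 = u.2.2 then ((dB : ℂ))⁻¹ else 0) *
          (star (U (u.1, u.2.2) k1) * U (u.1, u.2.1) k2 *
            star (U (v.1, v.2.2) k3) * U (v.1, v.2.1) k4) := by
        refine Finset.sum_congr rfl fun u _ => Finset.sum_congr rfl fun v _ => ?_
        rw [← hdesW v.2.2 u.2.1 v.2.1 u.2.2, Finset.sum_mul]
        exact Finset.sum_congr rfl fun j _ => by ring
    _ = _ := by
        simp only [Fintype.sum_prod_type, ite_and, ite_mul, mul_ite, zero_mul, mul_zero,
          Finset.sum_ite_irrel, Finset.sum_const_zero, Finset.sum_ite_eq, Finset.sum_ite_eq',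
          Finset.mem_univ, if_true]

theorem main_c {dA dB nA nB : ℕ}
    (p : Fin nA → ℝ) (V : Fin nA → Matrix (Fin dA) (Fin dA) ℂ)
    (q : Fin nB → ℝ) (W : Fin nB → Matrix (Fin dB) (Fin dB) ℂ)
    (hdesV : ∀ a a' x y : Fin dA, ∑ i, (p i : ℂ) * (V i a x * star (V i a' y)) =
      if a = a' ∧ x = y then ((dA : ℂ))⁻¹ else 0)
    (hdesW : ∀ a a' x y : Fin dB, ∑ j, (q j : ℂ) * (W j a x * star (W j a' y)) =
      if a = a' ∧ x = y then ((dB : ℂ))⁻¹ else 0)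
    (U : Matrix (Fin dA × Fin dB) (Fin dA × Fin dB) ℂ) :
    (∑ i, ∑ j, ((p i * q j : ℝ) : ℂ) *
        Matrix.trace (((V i)ᴴ ⊗ₖ (1 : Matrix (Fin dB) (Fin dB) ℂ)) * Uᴴ *
          ((1 : Matrix (Fin dA) (Fin dA) ℂ) ⊗ₖ (W j)ᴴ) * U *
          ((V i) ⊗ₖ (1 : Matrix (Fin dB) (Fin dB) ℂ)) * Uᴴ *
          ((1 : Matrix (Fin dA) (Fin dA) ℂ) ⊗ₖ (W j)) * U)) =
      ((dA : ℂ))⁻¹ * ((dB : ℂ))⁻¹ *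
        Matrix.trace (SAA dA dB * (U ⊗ₖ U) * SAA dA dB * (Uᴴ ⊗ₖ Uᴴ)) := by
  have h1 : ∀ i j,
      (((V i)ᴴ ⊗ₖ (1 : Matrix (Fin dB) (Fin dB) ℂ)) * Uᴴ *
          ((1 : Matrix (Fin dA) (Fin dA) ℂ) ⊗ₖ (W j)ᴴ) * U *
          ((V i) ⊗ₖ (1 : Matrix (Fin dB) (Fin dB) ℂ)) * Uᴴ *
          ((1 : Matrix (Fin dA) (Fin dA) ℂ) ⊗ₖ (W j)) * U) =
      ((V i)ᴴ ⊗ₖ (1 : Matrix (Fin dB) (Fin dB) ℂ)) *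
        (Uᴴ * ((1 : Matrix (Fin dA) (Fin dA) ℂ) ⊗ₖ (W j)ᴴ) * U) *
        ((V i) ⊗ₖ (1 : Matrix (Fin dB) (Fin dB) ℂ)) *
        (Uᴴ * ((1 : Matrix (Fin dA) (Fin dA) ℂ) ⊗ₖ (W j)) * U) := fun i j => by
    simp only [Matrix.mul_assoc]
  calc
    _ = ∑ i, ∑ j, ∑ z : Fin dA × Fin dB × Fin dA × Fin dB × Fin dA × Fin dA,
          ((p i * q j : ℝ) : ℂ) *
          (star (V i z.2.2.2.2.2 z.1) *
            (Uᴴ * ((1 : Matrix (Fin dA) (Fin dA) ℂ) ⊗ₖ (W j)ᴴ) * U)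
              (z.2.2.2.2.2, z.2.1) (z.2.2.2.2.1, z.2.2.2.1) *
            V i z.2.2.2.2.1 z.2.2.1 *
            (Uᴴ * ((1 : Matrix (Fin dA) (Fin dA) ℂ) ⊗ₖ (W j)) * U)
              (z.2.2.1, z.2.2.2.1) (z.1, z.2.1)) := by
      refine Finset.sum_congr rfl fun i _ => Finset.sum_congr rfl fun j _ => ?_
      rw [h1 i j, traceLp, Finset.mul_sum]
    _ = ∑ z : Fin dA × Fin dB × Fin dA × Fin dB × Fin dA × Fin dA, ∑ i, ∑ j,
          ((p i * q j : ℝ) : ℂ) *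
          (star (V i z.2.2.2.2.2 z.1) *
            (Uᴴ * ((1 : Matrix (Fin dA) (Fin dA) ℂ) ⊗ₖ (W j)ᴴ) * U)
              (z.2.2.2.2.2, z.2.1) (z.2.2.2.2.1, z.2.2.2.1) *
            V i z.2.2.2.2.1 z.2.2.1 *
            (Uᴴ * ((1 : Matrix (Fin dA) (Fin dA) ℂ) ⊗ₖ (W j)) * U)
              (z.2.2.1, z.2.2.2.1) (z.1, z.2.1)) := by
      rw [show (∑ i, ∑ j, ∑ z : Fin dA × Fin dB × Fin dA × Fin dB × Fin dA × Fin dA,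
          ((p i * q j : ℝ) : ℂ) *
          (star (V i z.2.2.2.2.2 z.1) *
            (Uᴴ * ((1 : Matrix (Fin dA) (Fin dA) ℂ) ⊗ₖ (W j)ᴴ) * U)
              (z.2.2.2.2.2, z.2.1) (z.2.2.2.2.1, z.2.2.2.1) *
            V i z.2.2.2.2.1 z.2.2.1 *
            (Uᴴ * ((1 : Matrix (Fin dA) (Fin dA) ℂ) ⊗ₖ (W j)) * U)
              (z.2.2.1, z.2.2.2.1) (z.1, z.2.1))) =
          ∑ i, ∑ z : Fin dA × Fin dB × Fin dA × Fin dB × Fin dA × Fin dA, ∑ j,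
          ((p i * q j : ℝ) : ℂ) *
          (star (V i z.2.2.2.2.2 z.1) *
            (Uᴴ * ((1 : Matrix (Fin dA) (Fin dA) ℂ) ⊗ₖ (W j)ᴴ) * U)
              (z.2.2.2.2.2, z.2.1) (z.2.2.2.2.1, z.2.2.2.1) *
            V i z.2.2.2.2.1 z.2.2.1 *
            (Uᴴ * ((1 : Matrix (Fin dA) (Fin dA) ℂ) ⊗ₖ (W j)) * U)
              (z.2.2.1, z.2.2.2.1) (z.1, z.2.1))
          from Finset.sum_congr rfl fun i _ => Finset.sum_comm]
      exact Finset.sum_comm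
    _ = ∑ z : Fin dA × Fin dB × Fin dA × Fin dB × Fin dA × Fin dA,
          (∑ i, (p i : ℂ) * (V i z.2.2.2.2.1 z.2.2.1 * star (V i z.2.2.2.2.2 z.1))) *
          (∑ j, (q j : ℂ) *
            ((Uᴴ * ((1 : Matrix (Fin dA) (Fin dA) ℂ) ⊗ₖ (W j)ᴴ) * U)
                (z.2.2.2.2.2, z.2.1) (z.2.2.2.2.1, z.2.2.2.1) *
             (Uᴴ * ((1 : Matrix (Fin dA) (Fin dA) ℂ) ⊗ₖ (W j)) * U)
                (z.2.2.1, z.2.2.2.1) (z.1, z.2.1))) := by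
      refine Finset.sum_congr rfl fun z _ => ?_
      rw [Finset.sum_mul_sum]
      refine Finset.sum_congr rfl fun i _ => Finset.sum_congr rfl fun j _ => ?_
      push_cast
      ring
    _ = ∑ z : Fin dA × Fin dB × Fin dA × Fin dB × Fin dA × Fin dA,
          (if z.2.2.2.2.1 = z.2.2.2.2.2 ∧ z.2.2.1 = z.1 then ((dA : ℂ))⁻¹ else 0) *
          (∑ j, (q j : ℂ) *
            ((Uᴴ * ((1 : Matrix (Fin dA) (Fin dA) ℂ) ⊗ₖ (W j)ᴴ) * U)
                (z.2.2.2.2.2, z.2.1) (z.2.2.2.2.1, z.2.2.2.1) *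
             (Uᴴ * ((1 : Matrix (Fin dA) (Fin dA) ℂ) ⊗ₖ (W j)) * U)
                (z.2.2.1, z.2.2.2.1) (z.1, z.2.1))) := by
      refine Finset.sum_congr rfl fun z _ => ?_
      rw [hdesV]
    _ = ∑ w : Fin dA × Fin dB × Fin dB × Fin dA, ((dA : ℂ))⁻¹ *
          (∑ j, (q j : ℂ) *
            ((Uᴴ * ((1 : Matrix (Fin dA) (Fin dA) ℂ) ⊗ₖ (W j)ᴴ) * U)
                (w.2.2.2, w.2.1) (w.2.2.2, w.2.2.1) *
             (Uᴴ * ((1 : Matrix (Fin dA) (Fin dA) ℂ) ⊗ₖ (W j)) * U)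
                (w.1, w.2.2.1) (w.1, w.2.1))) := by
      simp only [Fintype.sum_prod_type, ite_and, ite_mul, mul_ite, zero_mul, mul_zero,
        Finset.sum_ite_irrel, Finset.sum_const_zero, Finset.sum_ite_eq, Finset.sum_ite_eq',
        Finset.mem_univ, if_true]
    _ = ∑ w : Fin dA × Fin dB × Fin dB × Fin dA, ((dA : ℂ))⁻¹ *
          ∑ m : Fin dA × Fin dB × Fin dB × Fin dA, ((dB : ℂ))⁻¹ *
            (star (U (m.1, m.2.2.1) (w.2.2.2, w.2.1)) * U (m.1, m.2.1) (w.2.2.2, w.2.2.1) *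
              star (U (m.2.2.2, m.2.1) (w.1, w.2.2.1)) * U (m.2.2.2, m.2.2.1) (w.1, w.2.1)) := by
      refine Finset.sum_congr rfl fun w _ => ?_
      rw [javg q W hdesW U]
    _ = ((dA : ℂ))⁻¹ * ((dB : ℂ))⁻¹ *
          ∑ w : Fin dA × Fin dB × Fin dB × Fin dA, ∑ m : Fin dA × Fin dB × Fin dB × Fin dA,
            (star (U (m.1, m.2.2.1) (w.2.2.2, w.2.1)) * U (m.1, m.2.1) (w.2.2.2, w.2.2.1) *
              star (U (m.2.2.2, m.2.1) (w.1, w.2.2.1)) * U (m.2.2.2, m.2.2.1) (w.1, w.2.1)) := by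
      simp only [Finset.mul_sum]
      exact Finset.sum_congr rfl fun w _ => Finset.sum_congr rfl fun m _ => by ring
    _ = ((dA : ℂ))⁻¹ * ((dB : ℂ))⁻¹ *
        Matrix.trace (SAA dA dB * (U ⊗ₖ U) * SAA dA dB * (Uᴴ ⊗ₖ Uᴴ)) := by
      rw [traceRp]
      congr 1
      rw [pack2]
      exact (Fintype.sum_equiv (permE dA dB) _ _ fun t => by
        simp only [permE, Equiv.coe_fn_mk]; ring).symm

/-- Averaging the OTOC over 1-designs on `A` and `B` yields the replica formula
`(1/d) Re Σ_{ij} p_i q_j Tr(V_i†_A U† W_j†_B U V_i_A U† W_j_B U)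
  = (1/d²) Tr(S_{AA'} U^{⊗2} S_{AA'} U^{†⊗2})`. -/
theorem otoc_average_replica (dA dB nA nB : ℕ)
    (p : Fin nA → ℝ) (V : Fin nA → Matrix (Fin dA) (Fin dA) ℂ)
    (q : Fin nB → ℝ) (W : Fin nB → Matrix (Fin dB) (Fin dB) ℂ)
    (hp : ∀ i, 0 ≤ p i) (hpsum : ∑ i, p i = 1)
    (hq : ∀ j, 0 ≤ q j) (hqsum : ∑ j, q j = 1)
    (hV : ∀ i, V i ∈ Matrix.unitaryGroup (Fin dA) ℂ)
    (hW : ∀ j, W j ∈ Matrix.unitaryGroup (Fin dB) ℂ)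
    (hVdesign : ∀ X : Matrix (Fin dA) (Fin dA) ℂ,
      ∑ i, (p i : ℂ) • (V i * X * (V i)ᴴ) = (Matrix.trace X / dA) • 1)
    (hWdesign : ∀ Y : Matrix (Fin dB) (Fin dB) ℂ,
      ∑ j, (q j : ℂ) • (W j * Y * (W j)ᴴ) = (Matrix.trace Y / dB) • 1)
    (U : Matrix (Fin dA × Fin dB) (Fin dA × Fin dB) ℂ)
    (hU : U ∈ Matrix.unitaryGroup (Fin dA × Fin dB) ℂ) :
    (1 / (dA * dB : ℝ)) *
      (∑ i, ∑ j, ((p i * q j : ℝ) : ℂ) *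
        Matrix.trace (((V i)ᴴ ⊗ₖ (1 : Matrix (Fin dB) (Fin dB) ℂ)) * Uᴴ *
          ((1 : Matrix (Fin dA) (Fin dA) ℂ) ⊗ₖ (W j)ᴴ) * U *
          ((V i) ⊗ₖ (1 : Matrix (Fin dB) (Fin dB) ℂ)) * Uᴴ *
          ((1 : Matrix (Fin dA) (Fin dA) ℂ) ⊗ₖ (W j)) * U)).re =
    (1 / ((dA * dB : ℝ))^2) *
      (Matrix.trace (SAA dA dB * (U ⊗ₖ U) * SAA dA dB * (Uᴴ ⊗ₖ Uᴴ))).re := by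
  have hmain := main_c p V q W (designCoord p V hVdesign) (designCoord q W hWdesign) U
  rw [hmain]
  rw [show ((dA : ℂ))⁻¹ * ((dB : ℂ))⁻¹ = ((((dA * dB : ℝ))⁻¹ : ℝ) : ℂ) from by
    push_cast; rw [mul_inv]]
  rw [Complex.re_ofReal_mul]
  ring
end
end

section
/- The bipartite OTOC equals the operator entanglement of the evolution: for any unitary U on H_A ⊗ H_B, G_U = 1 − Tr(σ_U²), where σ_U = Tr_{BB'}(|U⟩⟨U|) and |U⟩ = (U ⊗ I)|φ⁺⟩ with |φ⁺⟩ = d^{−1/2} Σ_{i=1}^{d} |i⟩|i⟩ the maximally entangled state on H ⊗ H'. -/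
open Matrix Kronecker BigOperators

noncomputable section

/-- The maximally entangled state `|φ⁺⟩ = d^{−1/2} Σ_i |i⟩|i⟩` on `H ⊗ H'`. -/
def phiPlus (dA dB : ℕ) : (Fin dA × Fin dB) × (Fin dA × Fin dB) → ℂ :=
  fun p => if p.1 = p.2 then ((Real.sqrt (dA * dB) : ℂ))⁻¹ else 0

/-- The vectorized evolution `|U⟩ = (U ⊗ I)|φ⁺⟩`. -/
def vecU (dA dB : ℕ) (U : Matrix (Fin dA × Fin dB) (Fin dA × Fin dB) ℂ) :
    (Fin dA × Fin dB) × (Fin dA × Fin dB) → ℂ :=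
  Matrix.mulVec (U ⊗ₖ (1 : Matrix (Fin dA × Fin dB) (Fin dA × Fin dB) ℂ)) (phiPlus dA dB)

/-- `σ_U = Tr_{BB'}(|U⟩⟨U|)`, the reduced state of `|U⟩` on `AA'`. -/
def sigmaU (dA dB : ℕ) (U : Matrix (Fin dA × Fin dB) (Fin dA × Fin dB) ℂ) :
    Matrix (Fin dA × Fin dA) (Fin dA × Fin dA) ℂ :=
  Matrix.of fun p q => ∑ b : Fin dB, ∑ b' : Fin dB,
    vecU dA dB U ((p.1, b), (p.2, b')) * star (vecU dA dB U ((q.1, b), (q.2, b')))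

/-!
Both sides are the same quartic form in the entries of `U`. Writing
`K = Tr_{BB'}(vec U (vec U)†)` (so that `σ_U = K / d`), conjugating `U ⊗ U` by the swap of the two
`A` factors only permutes indices, and `Tr(S (U ⊗ U) S (U† ⊗ U†)) = Tr(K²)` is a reindexing of an
eight-fold sum.
-/

section PartialTrace

variable {α β : Type*}

def swapFstFactors : (α × β) × (α × β) ≃ (α × β) × (α × β) where
  toFun p := ((p.2.1, p.1.2), (p.1.1, p.2.2))
  invFun p := ((p.2.1, p.1.2), (p.1.1, p.2.2))
  left_inv _ := rfl
  right_inv _ := rfl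

@[simp]
lemma swapFstFactors_symm : (swapFstFactors : (α × β) × (α × β) ≃ _).symm = swapFstFactors :=
  rfl

variable [Fintype α] [Fintype β] {R : Type*} [CommSemiring R] [StarRing R]

def partialTraceVecOuter (U : Matrix (α × β) (α × β) R) : Matrix (α × α) (α × α) R :=
  of fun p q => ∑ b, ∑ b', U (p.1, b) (p.2, b') * star (U (q.1, b) (q.2, b'))

theorem trace_kronecker_submatrix_swapFstFactors_mul (U : Matrix (α × β) (α × β) R) :
    trace ((U ⊗ₖ U).submatrix swapFstFactors swapFstFactors * (Uᴴ ⊗ₖ Uᴴ)) =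
      trace (partialTraceVecOuter U * partialTraceVecOuter U) := by
  simp only [trace, diag, mul_apply, submatrix_apply, kroneckerMap_apply, conjTranspose_apply,
    partialTraceVecOuter, of_apply, Finset.sum_mul_sum, ← Fintype.sum_prod_type']
  -- `((a₁, b₁), (a₂, b₂)), ((c₁, e₁), (c₂, e₂))` on the left is
  -- `(a₂, c₂), (a₁, c₁), (b₁, e₁), (b₂, e₂)` on the right.
  refine Fintype.sum_equiv
    { toFun x := ((x.1.2.1, x.2.2.1), (x.1.1.1, x.2.1.1), (x.1.1.2, x.2.1.2), (x.1.2.2, x.2.2.2))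
      invFun y := (((y.2.1.1, y.2.2.1.1), (y.1.1, y.2.2.2.1)),
        ((y.2.1.2, y.2.2.1.2), (y.1.2, y.2.2.2.2)))
      left_inv _ := rfl
      right_inv _ := rfl } _ _ fun _ => ?_
  simp only [swapFstFactors, Equiv.coe_fn_mk]
  ring

end PartialTrace

lemma SAA_eq_toMatrix (dA dB : ℕ) :
    SAA dA dB = (swapFstFactors.toPEquiv.toMatrix : Matrix _ _ ℂ) := by
  ext p q
  simp only [SAA, of_apply, PEquiv.toMatrix_apply, Equiv.toPEquiv_apply, Option.mem_def,
    Option.some.injEq, swapFstFactors, Equiv.coe_fn_mk, Prod.ext_iff]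
  exact if_congr (by tauto) rfl rfl

lemma SAA_mul_mul_SAA (dA dB : ℕ)
    (M : Matrix ((Fin dA × Fin dB) × (Fin dA × Fin dB)) ((Fin dA × Fin dB) × (Fin dA × Fin dB)) ℂ) :
    SAA dA dB * M * SAA dA dB = M.submatrix swapFstFactors swapFstFactors := by
  rw [SAA_eq_toMatrix, PEquiv.toMatrix_toPEquiv_mul, PEquiv.mul_toMatrix_toPEquiv,
    swapFstFactors_symm, submatrix_submatrix]
  rfl

lemma vecU_apply (dA dB : ℕ) (U : Matrix (Fin dA × Fin dB) (Fin dA × Fin dB) ℂ)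
    (p : (Fin dA × Fin dB) × (Fin dA × Fin dB)) :
    vecU dA dB U p = U p.1 p.2 * ((Real.sqrt (dA * dB) : ℂ))⁻¹ := by
  simp only [vecU, mulVec, dotProduct, phiPlus, kroneckerMap_apply, one_apply]
  rw [Fintype.sum_prod_type]
  simp [mul_ite]

lemma sigmaU_eq_smul (dA dB : ℕ) (U : Matrix (Fin dA × Fin dB) (Fin dA × Fin dB) ℂ) :
    sigmaU dA dB U = ((dA * dB : ℝ) : ℂ)⁻¹ • partialTraceVecOuter U := by
  have hsqrt : ((Real.sqrt (dA * dB) : ℂ))⁻¹ * star ((Real.sqrt (dA * dB) : ℂ))⁻¹ =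
      ((dA * dB : ℝ) : ℂ)⁻¹ := by
    rw [star_inv₀, Complex.star_def, Complex.conj_ofReal, ← mul_inv, ← Complex.ofReal_mul,
      Real.mul_self_sqrt (by positivity)]
  ext p q
  simp only [sigmaU, partialTraceVecOuter, of_apply, Matrix.smul_apply, smul_eq_mul, vecU_apply,
    star_mul', Finset.mul_sum, ← hsqrt]
  exact Fintype.sum_congr _ _ fun b => Fintype.sum_congr _ _ fun b' => by ring

theorem otoc_eq_operator_entanglement_general (dA dB : ℕ)
    (U : Matrix (Fin dA × Fin dB) (Fin dA × Fin dB) ℂ) :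
    Greal dA dB U = 1 - (Matrix.trace (sigmaU dA dB U * sigmaU dA dB U)).re := by
  rw [Greal, SAA_mul_mul_SAA, trace_kronecker_submatrix_swapFstFactors_mul, sigmaU_eq_smul,
    smul_mul_smul, trace_smul, smul_eq_mul, ← Complex.ofReal_inv, ← Complex.ofReal_mul,
    Complex.re_ofReal_mul]
  ring

/-- The bipartite OTOC equals the operator entanglement of the evolution:
`G_U = 1 − Tr(σ_U²)`. -/
theorem otoc_eq_operator_entanglement (dA dB : ℕ) (hA : 0 < dA) (hB : 0 < dB)
    (U : Matrix (Fin dA × Fin dB) (Fin dA × Fin dB) ℂ)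
    (hU : U ∈ Matrix.unitaryGroup (Fin dA × Fin dB) ℂ) :
    Greal dA dB U = 1 - (Matrix.trace (sigmaU dA dB U * sigmaU dA dB U)).re :=
  otoc_eq_operator_entanglement_general dA dB U
end
end

section
/- Let H = Σ_k E_k |φ_k⟩⟨φ_k| be a Hamiltonian on ℂ^{d_A} ⊗ ℂ^{d_B} with nondegenerate energies and nondegenerate energy gaps (NRC: E_k + E_l = E_m + E_n implies {k,l} = {m,n}). Then the infinite-time average of G(t) = 1 − (1/d²)Tr(S_{AA'} U_t^{⊗2} S_{AA'} U_t^{†⊗2}) equals 1 − (1/d²) Σ_{χ∈{A,B}} (‖R^{(χ)}‖₂² − ½‖R_D^{(χ)}‖₂²), where R^{(χ)}_{kl} = Tr(ρ_k^{(χ)} ρ_l^{(χ)}), ρ_k^{(χ)} is the reduced density matrix of |φ_k⟩ on subsystem χ, and R_D^{(χ)} is the diagonal part of R^{(χ)}. -/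
/-
Spectrally, `U_t = ∑ₖ e^{-iEₖt} |φₖ⟩⟨φₖ|`: the exponential commutes with the continuous ring
homomorphism `a ↦ ∑ₖ aₖ |φₖ⟩⟨φₖ|`, which is multiplicative and unital because `(φₖ)` is an
orthonormal basis. Since `S_{AA'}` permutes product indices, `Tr(S (|x⟩⟨x|) S (|y⟩⟨y|)) =
|⟨y|S|x⟩|²`, and for `x = φₖ ⊗ φₗ`, `y = φₘ ⊗ φₙ` the amplitude is `Tr(Tr_B|φₖ⟩⟨φₘ| Tr_B|φₗ⟩⟨φₙ|)`.
Hence `G(U_t)` is `1` minus a finite cosine sum with frequencies `Eₖ + Eₗ - Eₘ - Eₙ`. Time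
averaging keeps exactly the resonant terms, which by NRC are `(m, n) = (k, l)`, giving
`Tr(ρₖ^A ρₗ^A)`, and `(m, n) = (l, k)`, giving `Tr(ρₖ^B ρₗ^B)`; the diagonal `k = l` lies in both
families, and `Tr((ρₖ^A)²) = Tr((ρₖ^B)²)` splits its correction evenly between `A` and `B`.
-/

open Matrix Kronecker BigOperators

noncomputable section

/-- Reduced density matrix on `A` of a pure state on `ℂ^{d_A} ⊗ ℂ^{d_B}`. -/
def rhoA (dA dB : ℕ) (ψ : Fin dA × Fin dB → ℂ) : Matrix (Fin dA) (Fin dA) ℂ :=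
  Matrix.of fun a c => ∑ b : Fin dB, ψ (a, b) * star (ψ (c, b))

/-- Reduced density matrix on `B` of a pure state on `ℂ^{d_A} ⊗ ℂ^{d_B}`. -/
def rhoB (dA dB : ℕ) (ψ : Fin dA × Fin dB → ℂ) : Matrix (Fin dB) (Fin dB) ℂ :=
  Matrix.of fun b b' => ∑ a : Fin dA, ψ (a, b) * star (ψ (a, b'))

/-- The Hamiltonian `H = Σ_k E_k |φ_k⟩⟨φ_k|`. -/
def hamOf (dA dB : ℕ) (E : Fin (dA * dB) → ℝ) (φ : Fin (dA * dB) → Fin dA × Fin dB → ℂ) :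
    Matrix (Fin dA × Fin dB) (Fin dA × Fin dB) ℂ :=
  ∑ k, (E k : ℂ) • Matrix.vecMulVec (φ k) (star (φ k))

/-- The time evolution `U_t = exp(−iHt)`. -/
def evolOf (dA dB : ℕ) (E : Fin (dA * dB) → ℝ) (φ : Fin (dA * dB) → Fin dA × Fin dB → ℂ)
    (t : ℝ) : Matrix (Fin dA × Fin dB) (Fin dA × Fin dB) ℂ :=
  NormedSpace.exp ((-(t : ℂ) * Complex.I) • hamOf dA dB E φ)

theorem Matrix.trace_mul_vecMulVec_mul_vecMulVec {n R : Type*} [Fintype n] [CommSemiring R]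
    (A B : Matrix n n R) (x x' y y' : n → R) :
    trace (A * vecMulVec x x' * B * vecMulVec y y') = (y' ⬝ᵥ A *ᵥ x) * (x' ⬝ᵥ B *ᵥ y) := by
  rw [mul_vecMulVec A x x', vecMulVec_mul _ x' B, vecMulVec_mul_vecMulVec, trace_vecMulVec,
    dotProduct_smul, smul_eq_mul, ← dotProduct_mulVec, dotProduct_comm _ y', mul_comm]

theorem Matrix.trace_mul_sum_smul_mul_sum_smul {n κ R : Type*} [Fintype n] [Fintype κ]
    [CommSemiring R] (A B : Matrix n n R) (a b : κ → R) (X Y : κ → Matrix n n R) :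
    trace (A * (∑ i, a i • X i) * B * ∑ j, b j • Y j) =
      ∑ i, ∑ j, a i * b j * trace (A * X i * B * Y j) := by
  simp only [Matrix.sum_mul, Matrix.mul_smul, Matrix.smul_mul, trace_sum,
    trace_smul, smul_eq_mul, Finset.mul_sum]
  rw [Finset.sum_comm]
  refine Finset.sum_congr rfl fun i _ => Finset.sum_congr rfl fun j _ => ?_
  ring

theorem Matrix.sum_smul_kronecker_sum_smul {m n κ R : Type*} [Fintype κ] [CommSemiring R]
    (a : κ → R) (X : κ → Matrix m n R) :
    (∑ k, a k • X k) ⊗ₖ (∑ l, a l • X l) = ∑ p : κ × κ, (a p.1 * a p.2) • (X p.1 ⊗ₖ X p.2) := by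
  ext p q
  simp only [kroneckerMap_apply, sum_apply, smul_apply, smul_eq_mul, Finset.sum_mul_sum,
    Fintype.sum_prod_type]
  exact Finset.sum_congr rfl fun k _ => Finset.sum_congr rfl fun l _ => by ring

theorem Matrix.vecMulVec_star_kronecker_vecMulVec_star {α β R : Type*} [CommSemiring R]
    [StarRing R] (u : α → R) (v : β → R) :
    vecMulVec u (star u) ⊗ₖ vecMulVec v (star v) =
      vecMulVec (fun p => u p.1 * v p.2) (star fun p => u p.1 * v p.2) := by
  ext p q
  simp only [kroneckerMap_apply, vecMulVec_apply, Pi.star_apply, star_mul']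
  ring

theorem Matrix.IsHermitian.im_trace_mul {n : Type*} [Fintype n] {A B : Matrix n n ℂ}
    (hA : A.IsHermitian) (hB : B.IsHermitian) : (trace (A * B)).im = 0 := by
  rw [← Complex.conj_eq_iff_im, ← Complex.star_def, ← trace_conjTranspose, conjTranspose_mul,
    hA.eq, hB.eq, trace_mul_comm]

theorem Matrix.conjTranspose_sum_smul_vecMulVec_star {n ι : Type*} [Fintype ι] (c : ι → ℂ)
    (φ : ι → n → ℂ) :
    (∑ k, c k • vecMulVec (φ k) (star (φ k)))ᴴ =
      ∑ k, star (c k) • vecMulVec (φ k) (star (φ k)) := by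
  simp only [conjTranspose_sum, conjTranspose_smul, conjTranspose_vecMulVec, star_star]

theorem Finset.sum_sum_sum_sum_comm {α β γ δ M : Type*} [Fintype α] [Fintype β] [Fintype γ]
    [Fintype δ] [AddCommMonoid M] (f : α → β → γ → δ → M) :
    ∑ a, ∑ b, ∑ c, ∑ d, f a b c d = ∑ c, ∑ d, ∑ a, ∑ b, f a b c d := by
  calc _ = ∑ x : α × β, ∑ y : γ × δ, f x.1 x.2 y.1 y.2 := by simp only [Fintype.sum_prod_type]
    _ = ∑ y : γ × δ, ∑ x : α × β, f x.1 x.2 y.1 y.2 := Finset.sum_comm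
    _ = _ := by simp only [Fintype.sum_prod_type]

theorem Matrix.IsHermitian.normSq_trace_mul {n : Type*} [Fintype n] {A B : Matrix n n ℂ}
    (hA : A.IsHermitian) (hB : B.IsHermitian) :
    Complex.normSq (trace (A * B)) = (trace (A * B)).re ^ 2 := by
  rw [Complex.normSq_apply, hA.im_trace_mul hB]
  ring

section Spectral

variable {n ι : Type*} [Fintype n] [DecidableEq ι] {φ : ι → n → ℂ}

theorem vecMulVec_star_mul_vecMulVec_star
    (hφ : ∀ k l, (∑ x, star (φ k x) * φ l x) = if k = l then 1 else 0) (k l : ι) :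
    vecMulVec (φ k) (star (φ k)) * vecMulVec (φ l) (star (φ l)) =
      if k = l then vecMulVec (φ k) (star (φ k)) else 0 := by
  rw [vecMulVec_mul_vecMulVec, show star (φ k) ⬝ᵥ φ l = _ from hφ k l]
  split_ifs with h <;> simp [h]

variable [DecidableEq n] [Fintype ι]

theorem sum_vecMulVec_star_eq_one (hcard : Fintype.card ι = Fintype.card n)
    (hφ : ∀ k l, (∑ x, star (φ k x) * φ l x) = if k = l then 1 else 0) :
    ∑ k, vecMulVec (φ k) (star (φ k)) = 1 := by
  let V : Matrix n ι ℂ := of fun x k => φ k x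
  have hVV : Vᴴ * V = 1 := by
    ext k l
    simpa [V, mul_apply, one_apply] using hφ k l
  have : V * Vᴴ = 1 := (mul_eq_one_comm_of_card_eq ι n ℂ hcard).mp hVV
  rw [← this]
  ext x y
  simp [V, mul_apply, Matrix.sum_apply, vecMulVec_apply]

def spectralRingHom (hcard : Fintype.card ι = Fintype.card n)
    (hφ : ∀ k l, (∑ x, star (φ k x) * φ l x) = if k = l then 1 else 0) :
    (ι → ℂ) →+* Matrix n n ℂ where
  toFun a := ∑ k, a k • vecMulVec (φ k) (star (φ k))
  map_one' := by simpa using sum_vecMulVec_star_eq_one hcard hφ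
  map_zero' := by simp
  map_add' a b := by simp [add_smul, Finset.sum_add_distrib]
  map_mul' a b := by
    simp only [Finset.sum_mul, Finset.mul_sum, smul_mul_smul_comm,
      vecMulVec_star_mul_vecMulVec_star hφ, smul_ite, smul_zero, Finset.sum_ite_eq',
      Finset.mem_univ, if_true, Pi.mul_apply]

theorem exp_sum_smul_vecMulVec_star (hcard : Fintype.card ι = Fintype.card n)
    (hφ : ∀ k l, (∑ x, star (φ k x) * φ l x) = if k = l then 1 else 0) (a : ι → ℂ) :
    NormedSpace.exp (∑ k, a k • vecMulVec (φ k) (star (φ k))) =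
      ∑ k, Complex.exp (a k) • vecMulVec (φ k) (star (φ k)) := by
  have hcont : Continuous (spectralRingHom hcard hφ) := by
    change Continuous fun a : ι → ℂ => ∑ k, a k • vecMulVec (φ k) (star (φ k))
    fun_prop
  have := open scoped Norms.Operator in NormedSpace.map_exp _ hcont a
  simp only [spectralRingHom, RingHom.coe_mk, MonoidHom.coe_mk, OneHom.coe_mk, Pi.exp_def,
    ← Complex.exp_eq_exp_ℂ] at this
  exact this.symm

end Spectral

section PartialTrace

variable {α β : Type*}

/-- `Tr_B |ψ⟩⟨χ|`; `rhoA` is its diagonal case `ψ = χ`. -/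
def partialTraceB [Fintype β] (ψ χ : α × β → ℂ) : Matrix α α ℂ :=
  of fun a c => ∑ b, ψ (a, b) * star (χ (c, b))

/-- `Tr_A |ψ⟩⟨χ|`; `rhoB` is its diagonal case `ψ = χ`. -/
def partialTraceA [Fintype α] (ψ χ : α × β → ℂ) : Matrix β β ℂ :=
  of fun b b' => ∑ a, ψ (a, b) * star (χ (a, b'))

theorem isHermitian_partialTraceB_self [Fintype β] (ψ : α × β → ℂ) :
    (partialTraceB ψ ψ).IsHermitian := by
  ext a c
  simp only [partialTraceB, conjTranspose_apply, of_apply, star_sum, star_mul', star_star]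
  exact Finset.sum_congr rfl fun b _ => mul_comm _ _

theorem isHermitian_partialTraceA_self [Fintype α] (ψ : α × β → ℂ) :
    (partialTraceA ψ ψ).IsHermitian := by
  ext b b'
  simp only [partialTraceA, conjTranspose_apply, of_apply, star_sum, star_mul', star_star]
  exact Finset.sum_congr rfl fun a _ => mul_comm _ _

theorem trace_partialTraceB_mul_partialTraceB_swap [Fintype α] [Fintype β] (u v : α × β → ℂ) :
    trace (partialTraceB u v * partialTraceB v u) =
      trace (partialTraceA u u * partialTraceA v v) := by
  simp only [trace, diag, mul_apply, partialTraceB, partialTraceA, of_apply, Finset.sum_mul_sum]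
  rw [Finset.sum_sum_sum_sum_comm]
  exact Finset.sum_congr rfl fun b _ => Finset.sum_congr rfl fun b' _ =>
    Finset.sum_congr rfl fun a _ => Finset.sum_congr rfl fun a' _ => by ring

def swapFst (p : (α × β) × (α × β)) : (α × β) × (α × β) :=
  ((p.2.1, p.1.2), (p.1.1, p.2.2))

theorem swapFst_involutive : Function.Involutive (swapFst : (α × β) × (α × β) → _) :=
  fun _ => rfl

theorem star_star_dotProduct_comp_swapFst [Fintype α] [Fintype β] (x y : (α × β) × (α × β) → ℂ) :
    star (star y ⬝ᵥ (x ∘ swapFst)) = star x ⬝ᵥ (y ∘ swapFst) := by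
  simp only [dotProduct, star_sum, star_mul', star_star, Pi.star_apply, Function.comp_apply]
  rw [← Equiv.sum_comp (swapFst_involutive.toPerm _)]
  simp only [Function.Involutive.coe_toPerm, swapFst_involutive _, mul_comm]

theorem star_kron_dotProduct_kron_comp_swapFst [Fintype α] [Fintype β] (u u' v v' : α × β → ℂ) :
    star (fun p : (α × β) × (α × β) => u' p.1 * v' p.2) ⬝ᵥ
        ((fun p : (α × β) × (α × β) => u p.1 * v p.2) ∘ swapFst) =
      trace (partialTraceB u u' * partialTraceB v v') := by
  simp only [dotProduct, Fintype.sum_prod_type, Pi.star_apply, star_mul', Function.comp_apply,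
    swapFst, trace, diag, mul_apply, partialTraceB, of_apply, Finset.sum_mul_sum]
  conv_lhs => enter [2, a]; rw [Finset.sum_comm]
  rw [Finset.sum_comm]
  exact Finset.sum_congr rfl fun a' _ => Finset.sum_congr rfl fun a _ =>
    Finset.sum_congr rfl fun b _ => Finset.sum_congr rfl fun b' _ => by ring

end PartialTrace

theorem SAA_apply {dA dB : ℕ} (p q : (Fin dA × Fin dB) × (Fin dA × Fin dB)) :
    SAA dA dB p q = if q = swapFst p then 1 else 0 := by
  obtain ⟨⟨a, b⟩, ⟨a', b'⟩⟩ := p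
  obtain ⟨⟨c, d⟩, ⟨c', d'⟩⟩ := q
  simp only [SAA, swapFst, of_apply, Prod.mk.injEq]
  grind

theorem SAA_mulVec {dA dB : ℕ} (x : (Fin dA × Fin dB) × (Fin dA × Fin dB) → ℂ) :
    SAA dA dB *ᵥ x = x ∘ swapFst := by
  ext p
  simp [mulVec, dotProduct, SAA_apply]

theorem trace_SAA_mul_vecMulVec_mul_SAA_mul_vecMulVec {dA dB : ℕ}
    (x y : (Fin dA × Fin dB) × (Fin dA × Fin dB) → ℂ) :
    trace (SAA dA dB * vecMulVec x (star x) * SAA dA dB * vecMulVec y (star y)) =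
      Complex.normSq (star y ⬝ᵥ (x ∘ swapFst)) := by
  rw [trace_mul_vecMulVec_mul_vecMulVec, SAA_mulVec, SAA_mulVec,
    ← star_star_dotProduct_comp_swapFst x y, Complex.star_def, Complex.mul_conj]

theorem trace_SAA_mul_kronecker_mul_SAA_mul_kronecker {dA dB : ℕ} {ι : Type*} [Fintype ι]
    (φ : ι → Fin dA × Fin dB → ℂ) (c : ι → ℂ) (U : Matrix (Fin dA × Fin dB) (Fin dA × Fin dB) ℂ)
    (hU : U = ∑ k, c k • vecMulVec (φ k) (star (φ k))) :
    trace (SAA dA dB * (U ⊗ₖ U) * SAA dA dB * (Uᴴ ⊗ₖ Uᴴ)) =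
      ∑ k, ∑ l, ∑ m, ∑ n, c k * c l * (star (c m) * star (c n)) *
        Complex.normSq (trace (partialTraceB (φ k) (φ m) * partialTraceB (φ l) (φ n))) := by
  rw [hU, conjTranspose_sum_smul_vecMulVec_star, sum_smul_kronecker_sum_smul,
    sum_smul_kronecker_sum_smul, trace_mul_sum_smul_mul_sum_smul]
  simp only [vecMulVec_star_kronecker_vecMulVec_star,
    trace_SAA_mul_vecMulVec_mul_SAA_mul_vecMulVec, star_kron_dotProduct_kron_comp_swapFst,
    Fintype.sum_prod_type]

theorem evolOf_eq_sum {dA dB : ℕ} (E : Fin (dA * dB) → ℝ)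
    {φ : Fin (dA * dB) → Fin dA × Fin dB → ℂ}
    (hortho : ∀ k l, (∑ x, star (φ k x) * φ l x) = if k = l then 1 else 0) (t : ℝ) :
    evolOf dA dB E φ t =
      ∑ k, Complex.exp (-(t : ℂ) * Complex.I * E k) • vecMulVec (φ k) (star (φ k)) := by
  rw [evolOf, hamOf, Finset.smul_sum]
  simp_rw [smul_smul]
  exact exp_sum_smul_vecMulVec_star (by simp) hortho _

theorem greal_evolOf_eq_sum_cos {dA dB : ℕ} (E : Fin (dA * dB) → ℝ)
    {φ : Fin (dA * dB) → Fin dA × Fin dB → ℂ}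
    (hortho : ∀ k l, (∑ x, star (φ k x) * φ l x) = if k = l then 1 else 0) (t : ℝ) :
    Greal dA dB (evolOf dA dB E φ t) = 1 - 1 / ((dA * dB : ℝ))^2 *
      ∑ k, ∑ l, ∑ m, ∑ n,
        Complex.normSq (trace (partialTraceB (φ k) (φ m) * partialTraceB (φ l) (φ n))) *
          Real.cos ((E k + E l - (E m + E n)) * t) := by
  have hphase : ∀ (k l m n) (r : ℝ),
      (Complex.exp (-(t : ℂ) * Complex.I * E k) * Complex.exp (-(t : ℂ) * Complex.I * E l) *
        (star (Complex.exp (-(t : ℂ) * Complex.I * E m)) *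
          star (Complex.exp (-(t : ℂ) * Complex.I * E n))) * r).re =
        r * Real.cos ((E k + E l - (E m + E n)) * t) := by
    intro k l m n r
    simp only [Complex.star_def, ← Complex.exp_conj, map_mul, map_neg, Complex.conj_ofReal,
      Complex.conj_I, ← Complex.exp_add]
    rw [show -(t : ℂ) * Complex.I * E k + -(t : ℂ) * Complex.I * E l +
        (-(t : ℂ) * -Complex.I * E m + -(t : ℂ) * -Complex.I * E n) =
        ((-((E k + E l - (E m + E n)) * t) : ℝ) : ℂ) * Complex.I by push_cast; ring,
      mul_comm, Complex.re_ofReal_mul, Complex.exp_ofReal_mul_I_re, Real.cos_neg]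
  rw [Greal, trace_SAA_mul_kronecker_mul_SAA_mul_kronecker φ _ _ (evolOf_eq_sum E hortho t)]
  simp only [Complex.re_sum, hphase]

open Filter Topology

theorem tendsto_average_cos (ω : ℝ) :
    Tendsto (fun T : ℝ => 1 / T * ∫ t in (0 : ℝ)..T, Real.cos (ω * t)) atTop
      (𝓝 (if ω = 0 then 1 else 0)) := by
  by_cases hω : ω = 0
  · subst hω
    simp only [zero_mul, Real.cos_zero, intervalIntegral.integral_const, sub_zero, smul_eq_mul,
      mul_one, if_true]
    refine tendsto_const_nhds.congr' ?_
    filter_upwards [eventually_ne_atTop 0] with T hT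
    field_simp
  · have hint : ∀ T : ℝ, ∫ t in (0 : ℝ)..T, Real.cos (ω * t) = Real.sin (ω * T) / ω := by
      intro T
      simp [intervalIntegral.integral_comp_mul_left (fun x => Real.cos x) hω, integral_cos,
        div_eq_inv_mul]
    simp only [hint, if_neg hω]
    have hbdd : ∀ T, ‖Real.sin (ω * T) / ω‖ ≤ 1 / |ω| := fun T => by
      rw [norm_div, Real.norm_eq_abs, Real.norm_eq_abs]
      gcongr
      exact Real.abs_sin_le_one _
    exact (tendsto_const_nhds.div_atTop tendsto_id).zero_mul_isBoundedUnder_le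
      (isBoundedUnder_of ⟨1 / |ω|, hbdd⟩)

theorem tendsto_average_sub_mul_sum_cos {κ : Type*} [Fintype κ] (a C : ℝ) (w ω : κ → ℝ) :
    Tendsto (fun T : ℝ => 1 / T * ∫ t in (0 : ℝ)..T, a - C * ∑ q, w q * Real.cos (ω q * t))
      atTop (𝓝 (a - C * ∑ q, if ω q = 0 then w q else 0)) := by
  have hcos : ∀ q T,
      IntervalIntegrable (fun t => w q * Real.cos (ω q * t)) MeasureTheory.volume 0 T :=
    fun q T => (by fun_prop : Continuous fun t => w q * Real.cos (ω q * t)).intervalIntegrable 0 T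
  have heq : ∀ᶠ T in atTop,
      (1 / T * T) * a - C * ∑ q, w q * (1 / T * ∫ t in (0 : ℝ)..T, Real.cos (ω q * t)) =
        1 / T * ∫ t in (0 : ℝ)..T, a - C * ∑ q, w q * Real.cos (ω q * t) :=
    Eventually.of_forall fun T => by
      have hsum : IntervalIntegrable (fun t => ∑ q, w q * Real.cos (ω q * t))
          MeasureTheory.volume 0 T :=
        (by fun_prop : Continuous fun t => ∑ q, w q * Real.cos (ω q * t)).intervalIntegrable 0 T
      rw [intervalIntegral.integral_sub intervalIntegrable_const (hsum.const_mul C),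
        intervalIntegral.integral_const_mul,
        intervalIntegral.integral_finsetSum fun q _ => hcos q T, intervalIntegral.integral_const]
      simp only [intervalIntegral.integral_const_mul, smul_eq_mul, sub_zero, mul_sub,
        Finset.mul_sum]
      congr 1
      · ring
      · exact Finset.sum_congr rfl fun q _ => by ring
  have hone : Tendsto (fun T : ℝ => 1 / T * T) atTop (𝓝 1) :=
    tendsto_const_nhds.congr' <| by
      filter_upwards [eventually_ne_atTop 0] with T hT
      field_simp
  refine Tendsto.congr' heq ?_
  convert (hone.mul_const a).sub ((tendsto_finsetSum _ fun q _ =>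
    (tendsto_average_cos (ω q)).const_mul (w q)).const_mul C) using 2
  simp only [mul_ite, mul_one, mul_zero, one_mul]

theorem sum_ite_resonant_eq_of_NRC {ι M : Type*} [Fintype ι] [DecidableEq ι] [AddCommGroup M]
    {E : ι → ℝ} (hNRC : ∀ k l m n, E k + E l = E m + E n → (k = m ∧ l = n) ∨ (k = n ∧ l = m))
    (f : ι → ι → ι → ι → M) :
    ∑ k, ∑ l, ∑ m, ∑ n, (if E k + E l - (E m + E n) = 0 then f k l m n else 0) =
      ∑ k, ∑ l, f k l k l + ∑ k, ∑ l, f k l l k - ∑ k, f k k k k := by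
  have hres : ∀ k l m n,
      E k + E l - (E m + E n) = 0 ↔ (m, n) ∈ ({(k, l), (l, k)} : Finset (ι × ι)) := by
    intro k l m n
    simp only [sub_eq_zero, Finset.mem_insert, Finset.mem_singleton, Prod.mk.injEq]
    constructor
    · intro h
      rcases hNRC k l m n h with ⟨rfl, rfl⟩ | ⟨rfl, rfl⟩ <;> simp
    · rintro (⟨rfl, rfl⟩ | ⟨rfl, rfl⟩) <;> ring
  have hinner : ∀ k l, ∑ m, ∑ n, (if E k + E l - (E m + E n) = 0 then f k l m n else 0) =
      f k l k l + f k l l k - if k = l then f k k k k else 0 := by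
    intro k l
    simp only [hres]
    rw [← Fintype.sum_prod_type' fun m n =>
        if (m, n) ∈ ({(k, l), (l, k)} : Finset (ι × ι)) then f k l m n else 0,
      Finset.sum_ite_mem, Finset.univ_inter]
    by_cases hkl : k = l
    · subst hkl; simp
    · rw [Finset.sum_pair (by simp [hkl]), if_neg hkl, sub_zero]
  simp only [hinner, Finset.sum_sub_distrib, Finset.sum_add_distrib, Finset.sum_ite_eq,
    Finset.mem_univ, if_true]

theorem otoc_time_average_NRC_general (dA dB : ℕ)
    (E : Fin (dA * dB) → ℝ) (φ : Fin (dA * dB) → Fin dA × Fin dB → ℂ)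
    (hortho : ∀ k l, (∑ x, star (φ k x) * φ l x) = if k = l then 1 else 0)
    (hNRC : ∀ k l m n, E k + E l = E m + E n → (k = m ∧ l = n) ∨ (k = n ∧ l = m)) :
    Filter.Tendsto
      (fun T : ℝ => (1 / T) * ∫ t in (0 : ℝ)..T, Greal dA dB (evolOf dA dB E φ t))
      Filter.atTop
      (nhds (1 - (1 / ((dA * dB : ℝ))^2) *
        (((∑ k, ∑ l, ((Matrix.trace (rhoA dA dB (φ k) * rhoA dA dB (φ l))).re)^2) -
            (1/2) * ∑ k, ((Matrix.trace (rhoA dA dB (φ k) * rhoA dA dB (φ k))).re)^2) +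
         ((∑ k, ∑ l, ((Matrix.trace (rhoB dA dB (φ k) * rhoB dA dB (φ l))).re)^2) -
            (1/2) * ∑ k, ((Matrix.trace (rhoB dA dB (φ k) * rhoB dA dB (φ k))).re)^2)))) := by
  let R k l m n := Complex.normSq (trace (partialTraceB (φ k) (φ m) * partialTraceB (φ l) (φ n)))
  have hRA : ∀ k l, R k l k l = (trace (rhoA dA dB (φ k) * rhoA dA dB (φ l))).re ^ 2 := fun k l =>
    (isHermitian_partialTraceB_self _).normSq_trace_mul (isHermitian_partialTraceB_self _)
  have hRB : ∀ k l, R k l l k = (trace (rhoB dA dB (φ k) * rhoB dA dB (φ l))).re ^ 2 := by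
    intro k l
    simp only [R, trace_partialTraceB_mul_partialTraceB_swap]
    exact (isHermitian_partialTraceA_self _).normSq_trace_mul (isHermitian_partialTraceA_self _)
  have h := tendsto_average_sub_mul_sum_cos 1 (1 / ((dA * dB : ℝ)) ^ 2)
    (fun q : Fin (dA * dB) × Fin (dA * dB) × Fin (dA * dB) × Fin (dA * dB) =>
      R q.1 q.2.1 q.2.2.1 q.2.2.2) (fun q => E q.1 + E q.2.1 - (E q.2.2.1 + E q.2.2.2))
  simp only [Fintype.sum_prod_type, sum_ite_resonant_eq_of_NRC hNRC, hRA, hRB] at h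
  simp only [greal_evolOf_eq_sum_cos E hortho]
  convert h using 3
  have hdiag : ∑ k, (trace (rhoA dA dB (φ k) * rhoA dA dB (φ k))).re ^ 2 =
      ∑ k, (trace (rhoB dA dB (φ k) * rhoB dA dB (φ k))).re ^ 2 :=
    Finset.sum_congr rfl fun k _ => (hRA k k).symm.trans (hRB k k)
  rw [hdiag]
  ring

/-- For a Hamiltonian with nondegenerate energies and nondegenerate gaps (NRC), the
infinite-time average of the bipartite OTOC equals
`1 − (1/d²) Σ_{χ∈{A,B}} (‖R^{(χ)}‖₂² − ½‖R_D^{(χ)}‖₂²)` where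
`R^{(χ)}_{kl} = Tr(ρ_k^{(χ)} ρ_l^{(χ)})`. -/
theorem otoc_time_average_NRC (dA dB : ℕ) (hA : 0 < dA) (hB : 0 < dB)
    (E : Fin (dA * dB) → ℝ) (φ : Fin (dA * dB) → Fin dA × Fin dB → ℂ)
    (hortho : ∀ k l, (∑ x, star (φ k x) * φ l x) = if k = l then 1 else 0)
    (hNRC : ∀ k l m n, E k + E l = E m + E n → (k = m ∧ l = n) ∨ (k = n ∧ l = m)) :
    Filter.Tendsto
      (fun T : ℝ => (1 / T) * ∫ t in (0 : ℝ)..T, Greal dA dB (evolOf dA dB E φ t))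
      Filter.atTop
      (nhds (1 - (1 / ((dA * dB : ℝ))^2) *
        (((∑ k, ∑ l, ((Matrix.trace (rhoA dA dB (φ k) * rhoA dA dB (φ l))).re)^2) -
            (1/2) * ∑ k, ((Matrix.trace (rhoA dA dB (φ k) * rhoA dA dB (φ k))).re)^2) +
         ((∑ k, ∑ l, ((Matrix.trace (rhoB dA dB (φ k) * rhoB dA dB (φ l))).re)^2) -
            (1/2) * ∑ k, ((Matrix.trace (rhoB dA dB (φ k) * rhoB dA dB (φ k))).re)^2)))) :=
  otoc_time_average_NRC_general dA dB E φ hortho hNRC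
end
end
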